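/- Assume condition (★). Then for every increasing function f : {0,1}^E → ℝ, φ^f_{G;β,q,ĥ}(f) ≤ ℙ_{G;β}(f), where ℙ_{G;β} is the product (Bernoulli) probability measure on {0,1}^E under which each edge e is independently open with probability p_e = 1 − exp(−qβJ_e). -/

import Mathlib

/-!
Opening an edge `e` multiplies the edge factor by `exp (qβJₑ) - 1` and either leaves the open
clusters unchanged or merges two of them, `C` and `C'`; since `Θ^f[C ∪ C'] ≤ Θ^f[C] Θ^f[C']`,
the conditional probability under `φ^f` that `e` is open, given all other edges, is at most
`1 - exp (-qβJₑ) = pₑ`. Any such weight is dominated by the Bernoulli product measure on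
increasing functions: averaging an increasing function over one coordinate under
Bernoulli(`pₑ`) keeps it increasing and does not decrease its integral against the weight, and
after averaging over every coordinate only the Bernoulli expectation is left.
-/

open Classical Finset

noncomputable section

/-- Two vertices are joined by an open edge of the configuration `ω`. -/
def OpenAdj {V E : Type*} (ends : E → V × V) (ω : E → Bool) (x y : V) : Prop :=
  ∃ e, ω e = true ∧ (ends e = (x, y) ∨ ends e = (y, x))

/-- `x` and `y` lie in the same open cluster of the configuration `ω`. -/
def ConnIn {V E : Type*} (ends : E → V × V) (ω : E → Bool) (x y : V) : Prop :=
  Relation.ReflTransGen (OpenAdj ends ω) x y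

/-- The open cluster of the vertex `x` in the configuration `ω`. -/
def cluster {V E : Type*} [Fintype V] (ends : E → V × V) (ω : E → Bool) (x : V) : Finset V :=
  Finset.univ.filter fun y => ConnIn ends ω x y

/-- The collection of all open clusters of the configuration `ω`
(the vertex sets of the connected components of the open subgraph). -/
def clusters {V E : Type*} [Fintype V] (ends : E → V × V) (ω : E → Bool) :
    Finset (Finset V) :=
  Finset.univ.image fun x => cluster ends ω x

/-- The free cluster weight `Θ^f[C] = Σ_{m=1}^q exp(β Σ_{x∈C} h_{x,m})`. -/
def thetaF {V : Type*} (q : ℕ) (β : ℝ) (h : V → Fin q → ℝ) (C : Finset V) : ℝ :=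
  ∑ m : Fin q, Real.exp (β * ∑ x ∈ C, h x m)

/-- The max-wired cluster weight: `Θ^f[C]` for clusters not touching the boundary `Vb`,
and `exp(β Σ_{x∈C} hmax x)` for clusters touching the boundary. -/
def thetaW {V : Type*} (q : ℕ) (β : ℝ) (h : V → Fin q → ℝ) (hmax : V → ℝ)
    (Vb : Finset V) (C : Finset V) : ℝ :=
  if C ∩ Vb = ∅ then thetaF q β h C else Real.exp (β * ∑ x ∈ C, hmax x)

/-- The function `g^f(ω) = Π_C Θ^f[C]`, the product over the open clusters of `ω`. -/
def gFree {V E : Type*} [Fintype V] (ends : E → V × V) (q : ℕ) (β : ℝ)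
    (h : V → Fin q → ℝ) (ω : E → Bool) : ℝ :=
  ∏ C ∈ clusters ends ω, thetaF q β h C

/-- The function `g^w(ω) = Π_C Θ^w[C]`, the product over the open clusters of `ω`. -/
def gWired {V E : Type*} [Fintype V] (ends : E → V × V) (q : ℕ) (β : ℝ)
    (h : V → Fin q → ℝ) (hmax : V → ℝ) (Vb : Finset V) (ω : E → Bool) : ℝ :=
  ∏ C ∈ clusters ends ω, thetaW q β h hmax Vb C

/-- The edge factor `Π_e (exp(qβJ_e) − 1)^{ω_e}`. -/
def edgeFactor {E : Type*} [Fintype E] (q : ℕ) (β : ℝ) (J : E → ℝ) (ω : E → Bool) : ℝ :=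
  ∏ e : E, if ω e then Real.exp ((q : ℝ) * β * J e) - 1 else 1

/-- The unnormalised weight of the free random-cluster measure. -/
def freeWeight {V E : Type*} [Fintype V] [Fintype E] (ends : E → V × V) (q : ℕ) (β : ℝ)
    (J : E → ℝ) (h : V → Fin q → ℝ) (ω : E → Bool) : ℝ :=
  edgeFactor q β J ω * gFree ends q β h ω

/-- The expectation `φ^f_{G;β,q,ĥ}(f)` under the free random-cluster measure. -/
def freeExp {V E : Type*} [Fintype V] [Fintype E] (ends : E → V × V) (q : ℕ) (β : ℝ)
    (J : E → ℝ) (h : V → Fin q → ℝ) (f : (E → Bool) → ℝ) : ℝ :=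
  (∑ ω : E → Bool, f ω * freeWeight ends q β J h ω) /
    ∑ ω : E → Bool, freeWeight ends q β J h ω

/-- The unnormalised weight of the max-wired random-cluster measure: supported on
configurations opening all boundary edges `Eb`, with edge factor over interior edges
and cluster weights `Θ^w`. -/
def wiredWeight {V E : Type*} [Fintype V] [Fintype E] (ends : E → V × V) (q : ℕ) (β : ℝ)
    (J : E → ℝ) (h : V → Fin q → ℝ) (hmax : V → ℝ) (Vb : Finset V) (Eb : Finset E)
    (ω : E → Bool) : ℝ :=
  (if ∀ e ∈ Eb, ω e = true then (1 : ℝ) else 0) *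
    (∏ e ∈ Ebᶜ, if ω e then Real.exp ((q : ℝ) * β * J e) - 1 else 1) *
    gWired ends q β h hmax Vb ω

/-- The expectation `φ^w_{G;β,q,ĥ}(f)` under the max-wired random-cluster measure. -/
def wiredExp {V E : Type*} [Fintype V] [Fintype E] (ends : E → V × V) (q : ℕ) (β : ℝ)
    (J : E → ℝ) (h : V → Fin q → ℝ) (hmax : V → ℝ) (Vb : Finset V) (Eb : Finset E)
    (f : (E → Bool) → ℝ) : ℝ :=
  (∑ ω : E → Bool, f ω * wiredWeight ends q β J h hmax Vb Eb ω) /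
    ∑ ω : E → Bool, wiredWeight ends q β J h hmax Vb Eb ω

/-- The expectation under the Bernoulli product measure in which each edge `e` is
independently open with probability `p_e = 1 − exp(−qβJ_e)`. -/
def bernExp {E : Type*} [Fintype E] (q : ℕ) (β : ℝ) (J : E → ℝ)
    (f : (E → Bool) → ℝ) : ℝ :=
  ∑ ω : E → Bool, f ω *
    ∏ e : E, if ω e then 1 - Real.exp (-((q : ℝ) * β * J e))
      else Real.exp (-((q : ℝ) * β * J e))

/-- A function of configurations is increasing for the coordinatewise order. -/
def IncreasingFn {E : Type*} (f : (E → Bool) → ℝ) : Prop :=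
  ∀ ⦃ω ω' : E → Bool⦄, (∀ e, ω e ≤ ω' e) → f ω ≤ f ω'

/-- Condition (★): there is a common colour `m*` attaining the maximal field
value `h_{x,max}` at every vertex `x`. -/
def StarCond {V : Type*} (q : ℕ) (h : V → Fin q → ℝ) : Prop :=
  ∃ m : Fin q, ∀ x k, h x k ≤ h x m

/-- Compatibility of the boundary data: every boundary edge joins an interior vertex to a
boundary vertex, and every interior edge joins two interior vertices (this is the structure
of `E ∪ ∂E` for a finite subgraph `G = (V,E)` of the hypercubic lattice, with `Vb = ∂V`
and `Eb = ∂E`). -/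
def BdryCompatible {V E : Type*} (ends : E → V × V) (Vb : Finset V) (Eb : Finset E) : Prop :=
  (∀ e ∈ Eb, ((ends e).1 ∈ Vb ∧ (ends e).2 ∉ Vb) ∨ ((ends e).1 ∉ Vb ∧ (ends e).2 ∈ Vb)) ∧
    ∀ e ∉ Eb, (ends e).1 ∉ Vb ∧ (ends e).2 ∉ Vb

/-- Indicator of the event `{x ↔ y}`. -/
def connInd {V E : Type*} (ends : E → V × V) (x y : V) (ω : E → Bool) : ℝ :=
  if ConnIn ends ω x y then 1 else 0

/-- Indicator of the event `{x ↔ S}` that some vertex of `S` lies in the open cluster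
of `x`. -/
def connToSetInd {V E : Type*} (ends : E → V × V) (x : V) (S : Finset V)
    (ω : E → Bool) : ℝ :=
  if ∃ y ∈ S, ConnIn ends ω x y then 1 else 0

open Function

section ProductMeasure

variable {E : Type*}

def bernWeight (p : E → ℝ) (e : E) (b : Bool) : ℝ :=
  if b then p e else 1 - p e

def averageAt (p : E → ℝ) (a : E) (F : (E → Bool) → ℝ) (ω : E → Bool) : ℝ :=
  (1 - p a) * F (update ω a false) + p a * F (update ω a true)

lemma averageAt_update (p : E → ℝ) (a : E) (F : (E → Bool) → ℝ) (ω : E → Bool)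
    (b : Bool) :
    averageAt p a F (update ω a b) = averageAt p a F ω := by
  simp only [averageAt, update_idem]

lemma monotone_averageAt {p : E → ℝ} (hp0 : ∀ e, 0 ≤ p e) (hp1 : ∀ e, p e ≤ 1) (a : E)
    {F : (E → Bool) → ℝ} (hF : Monotone F) : Monotone (averageAt p a F) := by
  intro ω ω' hle
  have hupd : ∀ b, update ω a b ≤ update ω' a b := fun b =>
    update_le_update_iff.2 ⟨le_rfl, fun j _ => hle j⟩
  exact add_le_add (mul_le_mul_of_nonneg_left (hF (hupd false)) (sub_nonneg.2 (hp1 a)))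
    (mul_le_mul_of_nonneg_left (hF (hupd true)) (hp0 a))

variable [Fintype E]

def bernProd (p : E → ℝ) (η : E → Bool) : ℝ :=
  ∏ e, bernWeight p e (η e)

-- `resample p S f ω` is the mean of `f` when the coordinates of `ω` in `S` are redrawn
-- independently, `e` being open with probability `p e`.
def resampleKernel (p : E → ℝ) (S : Finset E) (ω η : E → Bool) : ℝ :=
  ∏ e, if e ∈ S then bernWeight p e (η e) else if η e = ω e then 1 else 0

def resample (p : E → ℝ) (S : Finset E) (f : (E → Bool) → ℝ) (ω : E → Bool) : ℝ :=
  ∑ η, resampleKernel p S ω η * f η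

lemma resample_empty (p : E → ℝ) (f : (E → Bool) → ℝ) : resample p ∅ f = f := by
  ext ω
  simp [resample, resampleKernel, Fintype.prod_boole, ← funext_iff]

lemma resample_univ (p : E → ℝ) (f : (E → Bool) → ℝ) (ω : E → Bool) :
    resample p univ f ω = ∑ η, f η * bernProd p η := by
  simp [resample, resampleKernel, bernProd, mul_comm]

lemma resampleKernel_insert (p : E → ℝ) {S : Finset E} {a : E} (ha : a ∉ S)
    (ω η : E → Bool) :
    resampleKernel p (insert a S) ω η =
      (1 - p a) * resampleKernel p S (update ω a false) η +
        p a * resampleKernel p S (update ω a true) η := by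
  simp only [resampleKernel, ← Finset.mul_prod_erase univ _ (mem_univ a), update_self,
    Finset.mem_insert_self, if_true, ha, if_false]
  have hrest : ∀ b, ∏ e ∈ univ.erase a,
      (if e ∈ S then bernWeight p e (η e) else if η e = update ω a b e then 1 else 0) =
      ∏ e ∈ univ.erase a,
        (if e ∈ insert a S then bernWeight p e (η e) else if η e = ω e then 1 else 0) :=
    fun b => Finset.prod_congr rfl fun e he => by
      simp only [update_of_ne (Finset.ne_of_mem_erase he), Finset.mem_insert,
        Finset.ne_of_mem_erase he, false_or]
  rw [hrest, hrest]
  cases η a <;> simp [bernWeight]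

lemma resample_insert (p : E → ℝ) {S : Finset E} {a : E} (ha : a ∉ S)
    (f : (E → Bool) → ℝ) :
    resample p (insert a S) f = averageAt p a (resample p S f) := by
  ext ω
  simp only [resample, averageAt, resampleKernel_insert p ha, add_mul, Finset.sum_add_distrib,
    Finset.mul_sum, mul_assoc]

lemma monotone_resample {p : E → ℝ} (hp0 : ∀ e, 0 ≤ p e) (hp1 : ∀ e, p e ≤ 1)
    {f : (E → Bool) → ℝ} (hf : Monotone f) (S : Finset E) : Monotone (resample p S f) := by
  induction S using Finset.induction_on with
  | empty => rwa [resample_empty]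
  | @insert a S ha ih => rw [resample_insert p ha]; exact monotone_averageAt hp0 hp1 a ih

lemma sum_update_false_add_update_true (G : (E → Bool) → ℝ) (a : E) :
    ∑ ω, (G (update ω a false) + G (update ω a true)) = 2 * ∑ ω, G ω := by
  let flip : Equiv.Perm (E → Bool) :=
    Involutive.toPerm (fun ω => update ω a (!ω a)) fun ω => by simp
  have hpair : ∀ ω, G (update ω a false) + G (update ω a true) =
      G ω + G (update ω a (!ω a)) := by
    intro ω
    have hω : update ω a (ω a) = ω := update_eq_self a ω
    cases h : ω a <;> rw [h] at hω <;> simp [hω, add_comm]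
  rw [Finset.sum_congr rfl fun ω _ => hpair ω, Finset.sum_add_distrib, two_mul]
  congr 1
  exact Equiv.sum_comp flip G

variable {p : E → ℝ} {w : (E → Bool) → ℝ}

lemma sum_mul_le_sum_averageAt_mul
    (hw : ∀ ω e, (1 - p e) * w (update ω e true) ≤ p e * w (update ω e false))
    {F : (E → Bool) → ℝ} (hF : Monotone F) (a : E) :
    ∑ ω, F ω * w ω ≤ ∑ ω, averageAt p a F ω * w ω := by
  -- Pairing `ω` with its flip at `a`, the claim reduces to
  -- `(F₁ - F₀) * (p w₀ - (1 - p) w₁) ≥ 0`.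
  have hpoint : ∀ ω, F (update ω a false) * w (update ω a false) +
      F (update ω a true) * w (update ω a true) ≤
      averageAt p a F (update ω a false) * w (update ω a false) +
        averageAt p a F (update ω a true) * w (update ω a true) := by
    intro ω
    have hF01 : F (update ω a false) ≤ F (update ω a true) :=
      hF (update_le_update_iff'.2 (Bool.false_le true))
    rw [averageAt_update, averageAt_update, averageAt]
    nlinarith [mul_nonneg (sub_nonneg.2 hF01) (sub_nonneg.2 (hw ω a))]
  have := Finset.sum_le_sum fun ω (_ : ω ∈ univ) => hpoint ω
  rw [sum_update_false_add_update_true (fun ω => F ω * w ω),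
    sum_update_false_add_update_true (fun ω => averageAt p a F ω * w ω)] at this
  linarith

lemma sum_mul_le_sum_resample_mul (hp0 : ∀ e, 0 ≤ p e) (hp1 : ∀ e, p e ≤ 1)
    (hw : ∀ ω e, (1 - p e) * w (update ω e true) ≤ p e * w (update ω e false))
    {f : (E → Bool) → ℝ} (hf : Monotone f) (S : Finset E) :
    ∑ ω, f ω * w ω ≤ ∑ ω, resample p S f ω * w ω := by
  induction S using Finset.induction_on with
  | empty => rw [resample_empty]
  | @insert a S ha ih =>
    rw [resample_insert p ha]
    exact ih.trans (sum_mul_le_sum_averageAt_mul hw (monotone_resample hp0 hp1 hf S) a)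

theorem sum_mul_le_bernoulli (hp0 : ∀ e, 0 ≤ p e) (hp1 : ∀ e, p e ≤ 1)
    (hw : ∀ ω e, (1 - p e) * w (update ω e true) ≤ p e * w (update ω e false))
    {f : (E → Bool) → ℝ} (hf : Monotone f) :
    ∑ ω, f ω * w ω ≤ (∑ η, f η * bernProd p η) * ∑ ω, w ω := by
  simpa only [resample_univ, ← Finset.mul_sum] using
    sum_mul_le_sum_resample_mul hp0 hp1 hw hf univ

end ProductMeasure

section Clusters

variable {V E : Type*} {ends : E → V × V} {ω ω' : E → Bool} {x y z : V}

@[simp]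
lemma connIn_self : ConnIn ends ω x x := .refl

lemma OpenAdj.symm : OpenAdj ends ω x y → OpenAdj ends ω y x :=
  fun ⟨e, he, h⟩ => ⟨e, he, h.symm⟩

lemma ConnIn.symm (h : ConnIn ends ω x y) : ConnIn ends ω y x := by
  induction h with
  | refl => exact .refl
  | tail _ hbc ih => exact ih.head hbc.symm

lemma ConnIn.trans (hxy : ConnIn ends ω x y) (hyz : ConnIn ends ω y z) :
    ConnIn ends ω x z :=
  Relation.ReflTransGen.trans hxy hyz

lemma ConnIn.mono (hle : ω ≤ ω') (h : ConnIn ends ω x y) : ConnIn ends ω' x y :=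
  Relation.ReflTransGen.mono (fun _ _ ⟨e, he, hends⟩ =>
    ⟨e, Bool.eq_true_of_true_le (he ▸ hle e), hends⟩) _ _ h

variable [Fintype V]

@[simp]
lemma mem_cluster : y ∈ cluster ends ω x ↔ ConnIn ends ω x y := by simp [cluster]

lemma mem_cluster_self : x ∈ cluster ends ω x := by simp

lemma cluster_eq_cluster_iff : cluster ends ω x = cluster ends ω y ↔ ConnIn ends ω x y := by
  refine ⟨fun h => mem_cluster.1 (h ▸ mem_cluster_self), fun h => Finset.ext fun z => ?_⟩
  simp only [mem_cluster]
  exact ⟨h.symm.trans, h.trans⟩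

lemma cluster_mem_clusters : cluster ends ω x ∈ clusters ends ω :=
  Finset.mem_image_of_mem _ (mem_univ x)

lemma disjoint_cluster_of_ne (h : cluster ends ω x ≠ cluster ends ω y) :
    Disjoint (cluster ends ω x) (cluster ends ω y) := by
  refine Finset.disjoint_left.2 fun z hx hy => h ?_
  rw [cluster_eq_cluster_iff]
  exact (mem_cluster.1 hx).trans (mem_cluster.1 hy).symm

end Clusters

section EdgeOpening

variable {V E : Type*} [Fintype V] {ends : E → V × V} {ω : E → Bool} {a : E} {u v z : V}

def endpointClusters (ends : E → V × V) (ω : E → Bool) (a : E) : Finset V :=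
  cluster ends ω (ends a).1 ∪ cluster ends ω (ends a).2

lemma mem_endpointClusters :
    v ∈ endpointClusters ends ω a ↔
      ConnIn ends ω (ends a).1 v ∨ ConnIn ends ω (ends a).2 v := by
  simp [endpointClusters]

lemma mem_endpointClusters_of_connIn (hu : u ∈ endpointClusters ends ω a)
    (huv : ConnIn ends ω u v) : v ∈ endpointClusters ends ω a := by
  rcases mem_endpointClusters.1 hu with h | h
  exacts [mem_endpointClusters.2 (Or.inl (h.trans huv)),
    mem_endpointClusters.2 (Or.inr (h.trans huv))]

lemma le_update_true (ω : E → Bool) (a : E) : ω ≤ update ω a true :=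
  le_update_iff.2 ⟨Bool.le_true _, fun _ _ => le_rfl⟩

lemma connIn_update_true (h : ConnIn ends (update ω a true) u v) :
    ConnIn ends ω u v ∨
      (u ∈ endpointClusters ends ω a ∧ v ∈ endpointClusters ends ω a) := by
  induction h with
  | refl => exact Or.inl .refl
  | @tail b c _ hbc ih =>
    obtain ⟨e, he, hends⟩ := hbc
    by_cases hea : e = a
    · subst hea
      have hbc : b ∈ endpointClusters ends ω e ∧ c ∈ endpointClusters ends ω e := by
        rcases hends with h | h <;> simp [mem_endpointClusters, h]
      refine Or.inr ⟨?_, hbc.2⟩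
      rcases ih with h | h
      exacts [mem_endpointClusters_of_connIn hbc.1 h.symm, h.1]
    · have hbc : OpenAdj ends ω b c := ⟨e, by simpa [update_of_ne hea] using he, hends⟩
      rcases ih with h | ⟨hu, hb⟩
      exacts [Or.inl (h.tail hbc), Or.inr ⟨hu, mem_endpointClusters_of_connIn hb (.single hbc)⟩]

lemma cluster_update_true_fst :
    cluster ends (update ω a true) (ends a).1 = endpointClusters ends ω a := by
  have hxy : ConnIn ends (update ω a true) (ends a).1 (ends a).2 :=
    .single ⟨a, update_self .., Or.inl rfl⟩
  ext v
  rw [mem_cluster, mem_endpointClusters]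
  constructor
  · intro h
    rcases connIn_update_true h with h | ⟨_, hv⟩
    exacts [Or.inl h, mem_endpointClusters.1 hv]
  · rintro (h | h)
    exacts [h.mono (le_update_true ω a), hxy.trans (h.mono (le_update_true ω a))]

lemma mem_endpointClusters_iff_cluster_update_true :
    z ∈ endpointClusters ends ω a ↔
      cluster ends (update ω a true) z = endpointClusters ends ω a := by
  rw [← cluster_update_true_fst, mem_cluster, cluster_eq_cluster_iff]
  exact ⟨ConnIn.symm, ConnIn.symm⟩

lemma mem_endpointClusters_iff_cluster :
    z ∈ endpointClusters ends ω a ↔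
      cluster ends ω z = cluster ends ω (ends a).1 ∨
        cluster ends ω z = cluster ends ω (ends a).2 := by
  simp only [mem_endpointClusters, cluster_eq_cluster_iff]
  exact or_congr ⟨ConnIn.symm, ConnIn.symm⟩ ⟨ConnIn.symm, ConnIn.symm⟩

lemma cluster_update_true_of_notMem (hz : z ∉ endpointClusters ends ω a) :
    cluster ends (update ω a true) z = cluster ends ω z := by
  ext v
  simp only [mem_cluster]
  exact ⟨fun h => (connIn_update_true h).resolve_right fun h' => hz h'.1,
    fun h => h.mono (le_update_true ω a)⟩

lemma clusters_update_true_erase :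
    (clusters ends (update ω a true)).erase (endpointClusters ends ω a) =
      clusters ends ω \ {cluster ends ω (ends a).1, cluster ends ω (ends a).2} := by
  ext C
  simp only [Finset.mem_erase, Finset.mem_sdiff, clusters, Finset.mem_image, mem_univ,
    true_and, Finset.mem_insert, Finset.mem_singleton]
  constructor
  · rintro ⟨hne, z, rfl⟩
    have hz : z ∉ endpointClusters ends ω a :=
      fun hz => hne (mem_endpointClusters_iff_cluster_update_true.1 hz)
    rw [cluster_update_true_of_notMem hz]
    exact ⟨⟨z, rfl⟩, fun h => hz (mem_endpointClusters_iff_cluster.2 h)⟩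
  · rintro ⟨⟨z, rfl⟩, hne⟩
    have hz : z ∉ endpointClusters ends ω a :=
      fun hz => hne (mem_endpointClusters_iff_cluster.1 hz)
    exact ⟨fun h => hz (h ▸ mem_cluster_self), z, cluster_update_true_of_notMem hz⟩

end EdgeOpening

section FreeWeight

variable {V E : Type*} {q : ℕ} {β : ℝ} {h : V → Fin q → ℝ}

lemma thetaF_nonneg (C : Finset V) : 0 ≤ thetaF q β h C :=
  Finset.sum_nonneg fun _ _ => (Real.exp_pos _).le

lemma thetaF_pos (hq : 0 < q) (C : Finset V) : 0 < thetaF q β h C :=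
  have : Nonempty (Fin q) := ⟨⟨0, hq⟩⟩
  Finset.sum_pos (fun _ _ => Real.exp_pos _) univ_nonempty

-- `Σₘ aₘ bₘ ≤ (Σₘ aₘ)(Σₘ bₘ)` for nonnegative `aₘ, bₘ`.
lemma thetaF_union_le {C C' : Finset V} (hd : Disjoint C C') :
    thetaF q β h (C ∪ C') ≤ thetaF q β h C * thetaF q β h C' := by
  simp only [thetaF, Finset.sum_mul, Finset.sum_union hd, mul_add, Real.exp_add]
  refine Finset.sum_le_sum fun m _ => mul_le_mul_of_nonneg_left ?_ (Real.exp_pos _).le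
  exact Finset.single_le_sum (f := fun k => Real.exp (β * ∑ x ∈ C', h x k))
    (fun k _ => (Real.exp_pos _).le) (mem_univ m)

variable [Fintype V]

lemma thetaF_cluster_union_le {ends : E → V × V} {ω : E → Bool} (x y : V) :
    thetaF q β h (cluster ends ω x ∪ cluster ends ω y) ≤
      ∏ C ∈ {cluster ends ω x, cluster ends ω y}, thetaF q β h C := by
  by_cases hxy : cluster ends ω x = cluster ends ω y
  · simp [hxy]
  · rw [Finset.prod_pair hxy]
    exact thetaF_union_le (disjoint_cluster_of_ne hxy)

lemma gFree_update_true_le (ends : E → V × V) (ω : E → Bool) (a : E) :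
    gFree ends q β h (update ω a true) ≤ gFree ends q β h ω := by
  have hmem : endpointClusters ends ω a ∈ clusters ends (update ω a true) :=
    cluster_update_true_fst (ends := ends) (ω := ω) (a := a) ▸ cluster_mem_clusters
  have hsub : ({cluster ends ω (ends a).1, cluster ends ω (ends a).2} : Finset (Finset V)) ⊆
      clusters ends ω :=
    Finset.insert_subset_iff.2 ⟨cluster_mem_clusters,
      Finset.singleton_subset_iff.2 cluster_mem_clusters⟩
  rw [gFree, gFree, ← Finset.mul_prod_erase _ _ hmem, clusters_update_true_erase,
    ← Finset.prod_sdiff hsub, mul_comm]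
  exact mul_le_mul_of_nonneg_left (thetaF_cluster_union_le _ _)
    (Finset.prod_nonneg fun C _ => thetaF_nonneg C)

variable [Fintype E] {J : E → ℝ}

lemma edgeFactor_update_true (ω : E → Bool) (a : E) :
    edgeFactor q β J (update ω a true) =
      (Real.exp ((q : ℝ) * β * J a) - 1) * edgeFactor q β J (update ω a false) := by
  simp only [edgeFactor, ← Finset.mul_prod_erase univ _ (mem_univ a), update_self, if_true,
    Bool.false_eq_true, if_false, one_mul]
  congr 1
  exact Finset.prod_congr rfl fun e he => by simp [update_of_ne (Finset.ne_of_mem_erase he)]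

variable (hcoupling : ∀ e, 0 ≤ (q : ℝ) * β * J e)
include hcoupling

lemma edgeFactor_nonneg (ω : E → Bool) : 0 ≤ edgeFactor q β J ω :=
  Finset.prod_nonneg fun e _ => by
    split
    · exact sub_nonneg.2 (Real.one_le_exp (hcoupling e))
    · exact zero_le_one

lemma freeWeight_nonneg (ends : E → V × V) (ω : E → Bool) :
    0 ≤ freeWeight ends q β J h ω :=
  mul_nonneg (edgeFactor_nonneg hcoupling ω) (Finset.prod_nonneg fun C _ => thetaF_nonneg C)

lemma sum_freeWeight_pos (hq : 0 < q) (ends : E → V × V) :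
    0 < ∑ ω, freeWeight ends q β J h ω := by
  refine Finset.sum_pos' (fun ω _ => freeWeight_nonneg hcoupling ends ω)
    ⟨fun _ => false, mem_univ _, ?_⟩
  simpa [freeWeight, edgeFactor, gFree] using Finset.prod_pos fun C _ => thetaF_pos hq C

lemma freeWeight_update_ratio (ends : E → V × V) (ω : E → Bool) (a : E) :
    Real.exp (-((q : ℝ) * β * J a)) * freeWeight ends q β J h (update ω a true) ≤
      (1 - Real.exp (-((q : ℝ) * β * J a))) * freeWeight ends q β J h (update ω a false) := by
  have hexp : Real.exp (-((q : ℝ) * β * J a)) * (Real.exp ((q : ℝ) * β * J a) - 1) =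
      1 - Real.exp (-((q : ℝ) * β * J a)) := by
    rw [mul_sub, ← Real.exp_add, neg_add_cancel, Real.exp_zero, mul_one]
  have hgFree : gFree ends q β h (update ω a true) ≤ gFree ends q β h (update ω a false) := by
    simpa using gFree_update_true_le (q := q) (β := β) (h := h) ends (update ω a false) a
  rw [freeWeight, freeWeight, edgeFactor_update_true]
  calc _ = (1 - Real.exp (-((q : ℝ) * β * J a))) *
        (edgeFactor q β J (update ω a false) * gFree ends q β h (update ω a true)) := by
        rw [← hexp]; ring
    _ ≤ _ := mul_le_mul_of_nonneg_left
        (mul_le_mul_of_nonneg_left hgFree (edgeFactor_nonneg hcoupling _))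
        (sub_nonneg.2 (Real.exp_le_one_iff.2 (neg_nonpos.2 (hcoupling a))))

end FreeWeight

theorem stmt6_general {V E : Type*} [Fintype V] [Fintype E] (ends : E → V × V)
    (q : ℕ) (hq : 2 ≤ q) (β : ℝ) (hβ : 0 < β)
    (J : E → ℝ) (hJ : ∀ e, 0 ≤ J e)
    (h : V → Fin q → ℝ)
    (f : (E → Bool) → ℝ) (hf : IncreasingFn f) :
    freeExp ends q β J h f ≤ bernExp q β J f := by
  have hcoupling : ∀ e, 0 ≤ (q : ℝ) * β * J e := fun e => by have := hJ e; positivity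
  set p : E → ℝ := fun e => 1 - Real.exp (-((q : ℝ) * β * J e))
  have hp0 : ∀ e, 0 ≤ p e := fun e =>
    sub_nonneg.2 (Real.exp_le_one_iff.2 (neg_nonpos.2 (hcoupling e)))
  have hp1 : ∀ e, p e ≤ 1 := fun e => sub_le_self _ (Real.exp_pos _).le
  have hbern : bernExp q β J f = ∑ η, f η * bernProd p η := by
    simp [bernExp, bernProd, bernWeight, p]
  rw [freeExp, hbern, div_le_iff₀ (sum_freeWeight_pos hcoupling (by omega) ends)]
  exact sum_mul_le_bernoulli hp0 hp1
    (fun ω e => by simpa [p] using freeWeight_update_ratio hcoupling ends ω e) hf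

/-- under condition (★), the free random-cluster measure is dominated by
the Bernoulli product measure with `p_e = 1 − exp(−qβJ_e)` on increasing functions. -/
theorem stmt6 {V E : Type*} [Fintype V] [Fintype E] (ends : E → V × V)
    (q : ℕ) (hq : 2 ≤ q) (β : ℝ) (hβ : 0 < β)
    (J : E → ℝ) (hJ : ∀ e, 0 ≤ J e)
    (h : V → Fin q → ℝ) (hstar : StarCond q h)
    (f : (E → Bool) → ℝ) (hf : IncreasingFn f) :
    freeExp ends q β J h f ≤ bernExp q β J f :=
  stmt6_general ends q hq β hβ J hJ h f hf
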